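/- arXiv:2205.12510 — 3 statements merged into one kernel-verified Lean document; each statement's English description precedes it below -/
import Mathlib

section
/- Suppose v ≠ 0 and vᵀA₀v > 0. Then lim_{t→0⁺} (L(‖v‖ − t) − c) / t² = −d₁‖v‖² / ((σ² + d₁) vᵀA₀v) < 0, while L(γ) = c for all γ ≥ ‖v‖ (so the corresponding right-sided limit is 0). Hence the second derivative of L is discontinuous at γ = ‖v‖: the depth-1 model has a second-order phase transition at γ = ‖v‖. -/
/-!
Put `s = b² (σ² + d₁)` and `F(s) = vᵀ (s A₀ + γ I)⁻¹ v`; then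
`ℓ̄ = c + d₁ / (σ² + d₁) · s (γ - F(s))`. Since `F(s) ≤ ‖v‖² / γ`, the excess `s (γ - F(s))` is
nonnegative once `γ ≥ ‖v‖`, and `b = 0` attains `c`. Below `‖v‖`, the exact expansion
`γ² F(s) = γ ‖v‖² - s vᵀA₀v + s² (A₀v)ᵀ (s A₀ + γ I)⁻¹ (A₀v)`, whose remainder lies in
`[0, ‖A₀v‖² / γ]`, traps `inf_s s (γ - F(s))` between the minima of two quadratics in `s`: the
upper one is `-(‖v‖² - γ²)² / (4 vᵀA₀v)`; the lower one is the same with `vᵀA₀v` replaced by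
`vᵀA₀v - u ‖A₀v‖² / γ`, valid for `s ≤ u`, while for `s ≥ u` monotonicity of `F` keeps the
excess nonnegative. At `γ = ‖v‖ - t` one has `‖v‖² - γ² ≈ 2 ‖v‖ t`, and the cutoff `u = √t`
makes both bounds `-‖v‖² / vᵀA₀v · t² (1 + o(1))`.
-/

open Matrix

/-- The depth-1 effective loss
ℓ̄(b, γ) = −d₁ b² vᵀ (b²(σ²+d₁)A₀ + γI)⁻¹ v + c + γ d₁ b². -/
noncomputable def effLoss1 {n : ℕ} (A₀ : Matrix (Fin n) (Fin n) ℝ) (v : Fin n → ℝ)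
    (c : ℝ) (d₁ : ℕ) (σ : ℝ) (b γ : ℝ) : ℝ :=
  -(d₁ : ℝ) * b ^ 2 *
      (v ⬝ᵥ (((b ^ 2 * (σ ^ 2 + (d₁ : ℝ))) • A₀ + γ • (1 : Matrix (Fin n) (Fin n) ℝ))⁻¹.mulVec v))
    + c + γ * (d₁ : ℝ) * b ^ 2

namespace Matrix

variable {ι : Type*}

lemma posDef_smul_add_smul_one [DecidableEq ι] {A : Matrix ι ι ℝ} (hA : A.PosSemidef) {s γ : ℝ}
    (hs : 0 ≤ s) (hγ : 0 < γ) : (s • A + γ • 1).PosDef :=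
  PosDef.posSemidef_add (hA.smul hs) (PosDef.one.smul hγ)

variable [Fintype ι]

lemma IsHermitian.dotProduct_mulVec_comm {M : Matrix ι ι ℝ} (hM : M.IsHermitian) (x y : ι → ℝ) :
    x ⬝ᵥ M *ᵥ y = y ⬝ᵥ M *ᵥ x := by
  rw [dotProduct_mulVec, dotProduct_comm, ← mulVec_transpose,
    ← conjTranspose_eq_transpose_of_trivial, hM.eq]

lemma dotProduct_self_pos_of_dotProduct_mulVec_pos {A : Matrix ι ι ℝ} {v : ι → ℝ}
    (ha : 0 < v ⬝ᵥ A *ᵥ v) : 0 < v ⬝ᵥ v := by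
  have hv : v ≠ 0 := by rintro rfl; simp at ha
  simpa using dotProduct_star_self_pos_iff.2 hv

variable [DecidableEq ι]

lemma PosDef.mulVec_inv_mulVec {M : Matrix ι ι ℝ} (hM : M.PosDef) (x : ι → ℝ) :
    M *ᵥ M⁻¹ *ᵥ x = x := by
  rw [mulVec_mulVec, mul_nonsing_inv _ ((isUnit_iff_isUnit_det M).mp hM.isUnit), one_mulVec]

lemma PosDef.inv_mulVec_mulVec {M : Matrix ι ι ℝ} (hM : M.PosDef) (x : ι → ℝ) :
    M⁻¹ *ᵥ M *ᵥ x = x := by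
  rw [mulVec_mulVec, nonsing_inv_mul _ ((isUnit_iff_isUnit_det M).mp hM.isUnit), one_mulVec]

lemma PosDef.two_mul_dotProduct_sub_le {M : Matrix ι ι ℝ} (hM : M.PosDef) (x y : ι → ℝ) :
    2 * (y ⬝ᵥ x) - y ⬝ᵥ M *ᵥ y ≤ x ⬝ᵥ M⁻¹ *ᵥ x := by
  set u := M⁻¹ *ᵥ x
  have hu : M *ᵥ u = x := hM.mulVec_inv_mulVec x
  have h := hM.posSemidef.dotProduct_mulVec_nonneg (y - u)
  rw [star_trivial, mulVec_sub, dotProduct_sub, sub_dotProduct, sub_dotProduct, hu,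
    hM.isHermitian.dotProduct_mulVec_comm u y, hu] at h
  linarith [dotProduct_comm u x]

lemma PosDef.dotProduct_inv_mulVec_le {M M' : Matrix ι ι ℝ} (hM : M.PosDef)
    (h : (M' - M).PosSemidef) (x : ι → ℝ) :
    x ⬝ᵥ M'⁻¹ *ᵥ x ≤ x ⬝ᵥ M⁻¹ *ᵥ x := by
  have hM' : M'.PosDef := by simpa using hM.add_posSemidef h
  set w := M'⁻¹ *ᵥ x
  have hw : M' *ᵥ w = x := hM'.mulVec_inv_mulVec x
  have hle := h.dotProduct_mulVec_nonneg w
  rw [star_trivial, sub_mulVec, dotProduct_sub, hw] at hle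
  linarith [hM.two_mul_dotProduct_sub_le x w, dotProduct_comm w x]

end Matrix

section Resolvent

variable {ι : Type*} [Fintype ι] [DecidableEq ι] {A : Matrix ι ι ℝ}

noncomputable def resolventQuad (A : Matrix ι ι ℝ) (v : ι → ℝ) (s γ : ℝ) : ℝ :=
  v ⬝ᵥ (s • A + γ • (1 : Matrix ι ι ℝ))⁻¹ *ᵥ v

lemma resolventQuad_antitone (hA : A.PosSemidef) (v : ι → ℝ) {s s' γ : ℝ} (hs : 0 ≤ s)
    (hγ : 0 < γ) (hss' : s ≤ s') : resolventQuad A v s' γ ≤ resolventQuad A v s γ := by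
  refine (posDef_smul_add_smul_one hA hs hγ).dotProduct_inv_mulVec_le ?_ v
  rw [add_sub_add_right_eq_sub, ← sub_smul]
  exact hA.smul (sub_nonneg.2 hss')

lemma mul_resolventQuad_le (hA : A.PosSemidef) (v : ι → ℝ) {s γ : ℝ} (hs : 0 ≤ s)
    (hγ : 0 < γ) : γ * resolventQuad A v s γ ≤ v ⬝ᵥ v := by
  have hinv : (γ • (1 : Matrix ι ι ℝ))⁻¹ = γ⁻¹ • 1 :=
    inv_eq_left_inv (by simp [smul_smul, hγ.ne'])
  have h := (PosDef.one.smul hγ).dotProduct_inv_mulVec_le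
    (M' := s • A + γ • (1 : Matrix ι ι ℝ)) (by simpa using hA.smul hs) v
  rw [hinv, smul_mulVec, one_mulVec, dotProduct_smul, smul_eq_mul] at h
  calc γ * resolventQuad A v s γ ≤ γ * (γ⁻¹ * (v ⬝ᵥ v)) := by gcongr; exact h
    _ = v ⬝ᵥ v := by field_simp

lemma sq_mul_resolventQuad (hA : A.PosSemidef) (v : ι → ℝ) {s γ : ℝ} (hs : 0 ≤ s)
    (hγ : 0 < γ) :
    γ ^ 2 * resolventQuad A v s γ
      = γ * (v ⬝ᵥ v) - s * (v ⬝ᵥ A *ᵥ v) + s ^ 2 * resolventQuad A (A *ᵥ v) s γ := by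
  set M := s • A + γ • (1 : Matrix ι ι ℝ)
  have hM : M.PosDef := posDef_smul_add_smul_one hA hs hγ
  have hMx (x : ι → ℝ) : s • (A *ᵥ M⁻¹ *ᵥ x) + γ • M⁻¹ *ᵥ x = x := by
    have h := hM.mulVec_inv_mulVec x
    rwa [add_mulVec, smul_mulVec, smul_mulVec, one_mulVec] at h
  set w := M⁻¹ *ᵥ v
  set z := M⁻¹ *ᵥ A *ᵥ v
  have hz : A *ᵥ w = z := by
    have hAM : A * M = M * A := by simp [M, Matrix.mul_add, Matrix.add_mul]
    calc A *ᵥ w = M⁻¹ *ᵥ M *ᵥ A *ᵥ w := (hM.inv_mulVec_mulVec _).symm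
      _ = M⁻¹ *ᵥ A *ᵥ M *ᵥ w := by rw [mulVec_mulVec w M A, ← hAM, ← mulVec_mulVec]
      _ = z := by rw [hM.mulVec_inv_mulVec]
  have hv := congrArg (v ⬝ᵥ ·) (hMx v)
  have hAv := congrArg (v ⬝ᵥ ·) (hMx (A *ᵥ v))
  simp only [dotProduct_add, dotProduct_smul, smul_eq_mul] at hv hAv
  rw [hz] at hv
  rw [hA.isHermitian.dotProduct_mulVec_comm v z, dotProduct_comm z] at hAv
  unfold resolventQuad
  linear_combination γ * hv - s * hAv

lemma resolventQuad_nonneg (hA : A.PosSemidef) (v : ι → ℝ) {s γ : ℝ} (hs : 0 ≤ s)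
    (hγ : 0 < γ) : 0 ≤ resolventQuad A v s γ := by
  simpa [resolventQuad] using
    (posDef_smul_add_smul_one hA hs hγ).inv.posSemidef.dotProduct_mulVec_nonneg v

lemma cube_mul_resolventQuad_le (hA : A.PosSemidef) (v : ι → ℝ) {s γ : ℝ} (hs : 0 ≤ s)
    (hγ : 0 < γ) :
    γ ^ 3 * resolventQuad A v s γ
      ≤ γ ^ 2 * (v ⬝ᵥ v) - s * γ * (v ⬝ᵥ A *ᵥ v) + s ^ 2 * ((A *ᵥ v) ⬝ᵥ (A *ᵥ v)) := by
  have h := sq_mul_resolventQuad hA v hs hγ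
  have hR := mul_resolventQuad_le hA (A *ᵥ v) hs hγ
  have : s ^ 2 * (γ * resolventQuad A (A *ᵥ v) s γ) ≤ s ^ 2 * ((A *ᵥ v) ⬝ᵥ (A *ᵥ v)) := by
    gcongr
  linear_combination γ * h + this

lemma sub_le_sq_mul_resolventQuad (hA : A.PosSemidef) (v : ι → ℝ) {s γ : ℝ} (hs : 0 ≤ s)
    (hγ : 0 < γ) : γ * (v ⬝ᵥ v) - s * (v ⬝ᵥ A *ᵥ v) ≤ γ ^ 2 * resolventQuad A v s γ := by
  rw [sq_mul_resolventQuad hA v hs hγ]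
  have := resolventQuad_nonneg hA (A *ᵥ v) hs hγ
  nlinarith

noncomputable def reducedLoss (A : Matrix ι ι ℝ) (v : ι → ℝ) (s γ : ℝ) : ℝ :=
  s * (γ - resolventQuad A v s γ)

lemma reducedLoss_nonneg (hA : A.PosSemidef) {v : ι → ℝ} {s γ : ℝ} (hs : 0 ≤ s) (hγ : 0 < γ)
    (hv : v ⬝ᵥ v ≤ γ ^ 2) : 0 ≤ reducedLoss A v s γ := by
  have h := mul_resolventQuad_le hA v hs hγ
  have : resolventQuad A v s γ ≤ γ := by nlinarith
  exact mul_nonneg hs (sub_nonneg.2 this)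

lemma exists_reducedLoss_le (hA : A.PosSemidef) {v : ι → ℝ} {γ : ℝ} (hγ : 0 < γ)
    (ha : 0 < v ⬝ᵥ A *ᵥ v) (hv : γ ^ 2 ≤ v ⬝ᵥ v) :
    ∃ s, 0 ≤ s ∧ reducedLoss A v s γ ≤ -((v ⬝ᵥ v - γ ^ 2) ^ 2 / (4 * (v ⬝ᵥ A *ᵥ v))) := by
  set a := v ⬝ᵥ A *ᵥ v
  set Δ := v ⬝ᵥ v - γ ^ 2 with hΔ
  -- `s` minimises the upper bound `γ² · reducedLoss ≤ s (s a - γ Δ)`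
  set s := γ * Δ / (2 * a) with hs_def
  have hs : 0 ≤ s := by
    have : 0 ≤ Δ := sub_nonneg.2 hv
    positivity
  refine ⟨s, hs, le_of_mul_le_mul_left ?_ (pow_pos hγ 2)⟩
  have h := mul_le_mul_of_nonneg_left (sub_le_sq_mul_resolventQuad hA v hs hγ) hs
  have hopt : s * (s * a - γ * Δ) = γ ^ 2 * -(Δ ^ 2 / (4 * a)) := by
    rw [hs_def]; field_simp; ring
  unfold reducedLoss
  linear_combination h + hopt + s * γ * hΔ

lemma neg_div_le_reducedLoss (hA : A.PosSemidef) {v : ι → ℝ} {s γ u : ℝ} (hs : 0 ≤ s)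
    (hγ : 0 < γ) (hu : 0 < u)
    (hE : 0 < γ * (v ⬝ᵥ A *ᵥ v) - u * ((A *ᵥ v) ⬝ᵥ (A *ᵥ v)))
    (hreg : γ ^ 2 * (v ⬝ᵥ v - γ ^ 2) ≤ u * (γ * (v ⬝ᵥ A *ᵥ v) - u * ((A *ᵥ v) ⬝ᵥ (A *ᵥ v)))) :
    -(γ * (v ⬝ᵥ v - γ ^ 2) ^ 2 / (4 * (γ * (v ⬝ᵥ A *ᵥ v) - u * ((A *ᵥ v) ⬝ᵥ (A *ᵥ v)))))
      ≤ reducedLoss A v s γ := by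
  have hF := cube_mul_resolventQuad_le hA v hs hγ
  have hFu := cube_mul_resolventQuad_le hA v hu.le hγ
  have hmono := resolventQuad_antitone hA v (s' := s) hu.le hγ
  have hW : 0 ≤ (A *ᵥ v) ⬝ᵥ (A *ᵥ v) := by simpa using dotProduct_star_self_nonneg (A *ᵥ v)
  unfold reducedLoss
  generalize v ⬝ᵥ v = V at *
  generalize v ⬝ᵥ A *ᵥ v = a at *
  generalize (A *ᵥ v) ⬝ᵥ (A *ᵥ v) = W at *
  generalize resolventQuad A v s γ = F at *
  generalize resolventQuad A v u γ = Fu at *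
  set E := γ * a - u * W
  rcases le_total u s with hus | hsu
  · -- for `s ≥ u` the loss is nonnegative, because `F ≤ Fu ≤ γ`
    have hFs : F ≤ γ := by nlinarith [hmono hus, pow_pos hγ 3]
    have : 0 ≤ γ * (V - γ ^ 2) ^ 2 / (4 * E) := by positivity
    nlinarith [mul_nonneg hs (sub_nonneg.2 hFs)]
  · -- drop the cubic term `s³ W ≤ s² u W` and minimise the remaining quadratic in `s`
    have hcubic : E * s ^ 2 - γ ^ 2 * (V - γ ^ 2) * s ≤ γ ^ 3 * (s * (γ - F)) := by
      nlinarith [mul_le_mul_of_nonneg_left hsu (mul_nonneg (sq_nonneg s) hW),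
        mul_le_mul_of_nonneg_left hF hs]
    have hquad : -(γ ^ 4 * (V - γ ^ 2) ^ 2 / (4 * E)) ≤ E * s ^ 2 - γ ^ 2 * (V - γ ^ 2) * s := by
      rw [neg_le, neg_sub, le_div_iff₀ (by positivity)]
      nlinarith [sq_nonneg (2 * E * s - γ ^ 2 * (V - γ ^ 2))]
    refine le_of_mul_le_mul_left ?_ (pow_pos hγ 3)
    calc γ ^ 3 * -(γ * (V - γ ^ 2) ^ 2 / (4 * E)) = -(γ ^ 4 * (V - γ ^ 2) ^ 2 / (4 * E)) := by
          ring
      _ ≤ γ ^ 3 * (s * (γ - F)) := hquad.trans hcubic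

end Resolvent

section EffLoss

variable {n : ℕ} {A₀ : Matrix (Fin n) (Fin n) ℝ} {v : Fin n → ℝ} {c : ℝ} {d₁ : ℕ} {σ : ℝ}

lemma effLoss1_eq_add_reducedLoss (hd₁ : 0 < d₁) (b γ : ℝ) :
    effLoss1 A₀ v c d₁ σ b γ
      = c + d₁ / (σ ^ 2 + d₁) * reducedLoss A₀ v (b ^ 2 * (σ ^ 2 + d₁)) γ := by
  have : (0 : ℝ) < σ ^ 2 + d₁ := by positivity
  unfold effLoss1 reducedLoss resolventQuad
  field_simp
  ring

lemma iInf_effLoss1_mem_Icc (hd₁ : 0 < d₁) {γ m s₀ : ℝ}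
    (hm : ∀ s, 0 ≤ s → m ≤ reducedLoss A₀ v s γ) (hs₀ : 0 ≤ s₀) :
    ⨅ b, effLoss1 A₀ v c d₁ σ b γ
      ∈ Set.Icc (c + d₁ / (σ ^ 2 + d₁) * m) (c + d₁ / (σ ^ 2 + d₁) * reducedLoss A₀ v s₀ γ) := by
  have hτ : (0 : ℝ) < σ ^ 2 + d₁ := by positivity
  have hlower (b : ℝ) : c + d₁ / (σ ^ 2 + d₁) * m ≤ effLoss1 A₀ v c d₁ σ b γ := by
    rw [effLoss1_eq_add_reducedLoss hd₁]
    gcongr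
    exact hm _ (by positivity)
  refine ⟨le_ciInf hlower,
    (ciInf_le ⟨_, Set.forall_mem_range.2 hlower⟩ √(s₀ / (σ ^ 2 + d₁))).trans_eq ?_⟩
  rw [effLoss1_eq_add_reducedLoss hd₁, Real.sq_sqrt (by positivity), div_mul_cancel₀ _ hτ.ne']

lemma iInf_effLoss1_eq_of_sq_le (hA : A₀.PosSemidef) (hd₁ : 0 < d₁) {γ : ℝ} (hγ : 0 < γ)
    (hv : v ⬝ᵥ v ≤ γ ^ 2) : ⨅ b, effLoss1 A₀ v c d₁ σ b γ = c := by
  have h := iInf_effLoss1_mem_Icc (c := c) (σ := σ) hd₁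
    (fun s hs => reducedLoss_nonneg hA hs hγ hv) le_rfl
  simpa [reducedLoss] using h

lemma iInf_effLoss1_sub_div_sq_mem_Icc (hA : A₀.PosSemidef) (hd₁ : 0 < d₁)
    (ha : 0 < v ⬝ᵥ A₀ *ᵥ v) {r t : ℝ} (hr : r ^ 2 = v ⬝ᵥ v) (ht : 0 < t) (htr : t < r)
    (hreg : √t * ((r - t) ^ 2 * (2 * r - t))
      < (r - t) * (v ⬝ᵥ A₀ *ᵥ v) - √t * ((A₀ *ᵥ v) ⬝ᵥ (A₀ *ᵥ v))) :
    ((⨅ b, effLoss1 A₀ v c d₁ σ b (r - t)) - c) / t ^ 2 ∈ Set.Icc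
      (-(d₁ / (σ ^ 2 + d₁) * ((r - t) * (2 * r - t) ^ 2
        / (4 * ((r - t) * (v ⬝ᵥ A₀ *ᵥ v) - √t * ((A₀ *ᵥ v) ⬝ᵥ (A₀ *ᵥ v)))))))
      (-(d₁ / (σ ^ 2 + d₁) * ((2 * r - t) ^ 2 / (4 * (v ⬝ᵥ A₀ *ᵥ v))))) := by
  have hγ : 0 < r - t := sub_pos.2 htr
  have hu : 0 < √t := Real.sqrt_pos.2 ht
  have hΔ : v ⬝ᵥ v - (r - t) ^ 2 = t * (2 * r - t) := by rw [← hr]; ring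
  have h2rt : 0 < 2 * r - t := by linarith
  have hE : 0 < (r - t) * (v ⬝ᵥ A₀ *ᵥ v) - √t * ((A₀ *ᵥ v) ⬝ᵥ (A₀ *ᵥ v)) :=
    lt_of_le_of_lt (by positivity) hreg
  have hreg' : (r - t) ^ 2 * (v ⬝ᵥ v - (r - t) ^ 2)
      ≤ √t * ((r - t) * (v ⬝ᵥ A₀ *ᵥ v) - √t * ((A₀ *ᵥ v) ⬝ᵥ (A₀ *ᵥ v))) := by
    rw [hΔ]
    nlinarith [mul_lt_mul_of_pos_left hreg hu, Real.mul_self_sqrt ht.le]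
  obtain ⟨s₀, hs₀, hs₀le⟩ := exists_reducedLoss_le hA hγ ha (by nlinarith)
  obtain ⟨hlo, hhi⟩ := iInf_effLoss1_mem_Icc (c := c) (σ := σ) hd₁
    (fun s hs => neg_div_le_reducedLoss hA hs hγ hu hE hreg') hs₀
  have hk : (0 : ℝ) ≤ d₁ / (σ ^ 2 + d₁) := by positivity
  rw [hΔ] at hlo hs₀le
  constructor
  · rw [le_div_iff₀ (by positivity)]
    convert sub_le_sub_right hlo c using 1
    field_simp; ring
  · rw [div_le_iff₀ (by positivity)]
    have hup := hhi.trans (add_le_add_right (mul_le_mul_of_nonneg_left hs₀le hk) c)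
    convert sub_le_sub_right hup c using 1
    field_simp; ring

open Filter Topology in
theorem tendsto_iInf_effLoss1_sub_div_sq (hA : A₀.PosSemidef) (hd₁ : 0 < d₁)
    (ha : 0 < v ⬝ᵥ A₀ *ᵥ v) :
    Tendsto (fun t => ((⨅ b, effLoss1 A₀ v c d₁ σ b (√(v ⬝ᵥ v) - t)) - c) / t ^ 2) (𝓝[>] 0)
      (𝓝 (-(d₁ * (v ⬝ᵥ v) / ((σ ^ 2 + d₁) * (v ⬝ᵥ A₀ *ᵥ v))))) := by
  have hV := dotProduct_self_pos_of_dotProduct_mulVec_pos ha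
  set r := √(v ⬝ᵥ v)
  have hr : 0 < r := Real.sqrt_pos.2 hV
  have hr2 : r ^ 2 = v ⬝ᵥ v := Real.sq_sqrt hV.le
  have hτ : (0 : ℝ) < σ ^ 2 + d₁ := by positivity
  have hlim {f : ℝ → ℝ} (hf : ContinuousAt f 0)
      (h0 : f 0 = -(d₁ * (v ⬝ᵥ v) / ((σ ^ 2 + d₁) * (v ⬝ᵥ A₀ *ᵥ v)))) :
      Tendsto f (𝓝[>] 0) (𝓝 (-(d₁ * (v ⬝ᵥ v) / ((σ ^ 2 + d₁) * (v ⬝ᵥ A₀ *ᵥ v))))) :=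
    (h0 ▸ hf.tendsto).mono_left nhdsWithin_le_nhds
  have hreg : ∀ᶠ t in 𝓝 0, √t * ((r - t) ^ 2 * (2 * r - t))
      < (r - t) * (v ⬝ᵥ A₀ *ᵥ v) - √t * ((A₀ *ᵥ v) ⬝ᵥ (A₀ *ᵥ v)) :=
    ContinuousAt.eventually_lt (by fun_prop) (by fun_prop)
      (by simp only [Real.sqrt_zero, zero_mul, sub_zero]; positivity)
  have hbounds := (eventually_mem_nhdsWithin.and
    (nhdsWithin_le_nhds ((eventually_lt_nhds hr).and hreg))).mono fun t ⟨ht, htr, hreg⟩ =>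
      iInf_effLoss1_sub_div_sq_mem_Icc (c := c) (σ := σ) hA hd₁ ha hr2 ht htr hreg
  refine tendsto_of_tendsto_of_tendsto_of_le_of_le' (hlim ?_ ?_) (hlim ?_ ?_)
    (hbounds.mono fun _ h => h.1) (hbounds.mono fun _ h => h.2)
  · refine ContinuousAt.neg <| continuousAt_const.mul <| ContinuousAt.div (by fun_prop)
      (by fun_prop) ?_
    simp only [Real.sqrt_zero, sub_zero, zero_mul]
    positivity
  · simp only [Real.sqrt_zero, sub_zero, zero_mul]
    rw [← hr2]
    field_simp
    ring
  · fun_prop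
  · simp only [sub_zero]
    rw [← hr2]
    field_simp
    ring

end EffLoss

theorem depth_one_second_order_transition_general {n : ℕ}
    (A₀ : Matrix (Fin n) (Fin n) ℝ) (hA : A₀.PosSemidef)
    (v : Fin n → ℝ) (hvA : 0 < v ⬝ᵥ A₀.mulVec v)
    (c : ℝ) (d₁ : ℕ) (hd₁ : 0 < d₁) (σ : ℝ) :
    Filter.Tendsto
      (fun t : ℝ =>
        ((⨅ b : ℝ, effLoss1 A₀ v c d₁ σ b (Real.sqrt (v ⬝ᵥ v) - t)) - c) / t ^ 2)
      (nhdsWithin 0 (Set.Ioi 0))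
      (nhds (-((d₁ : ℝ) * (v ⬝ᵥ v) / ((σ ^ 2 + (d₁ : ℝ)) * (v ⬝ᵥ A₀.mulVec v))))) ∧
    -((d₁ : ℝ) * (v ⬝ᵥ v) / ((σ ^ 2 + (d₁ : ℝ)) * (v ⬝ᵥ A₀.mulVec v))) < 0 ∧
    ∀ γ : ℝ, Real.sqrt (v ⬝ᵥ v) ≤ γ → (⨅ b : ℝ, effLoss1 A₀ v c d₁ σ b γ) = c := by
  have hV := dotProduct_self_pos_of_dotProduct_mulVec_pos hvA
  refine ⟨tendsto_iInf_effLoss1_sub_div_sq hA hd₁ hvA, ?_, fun γ hγ => ?_⟩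
  · have : 0 < (d₁ : ℝ) * (v ⬝ᵥ v) / ((σ ^ 2 + d₁) * (v ⬝ᵥ A₀ *ᵥ v)) := by positivity
    linarith
  · exact iInf_effLoss1_eq_of_sq_le hA hd₁ ((Real.sqrt_pos.2 hV).trans_le hγ)
      (Real.sqrt_le_iff.1 hγ).2

/-- lim_{t→0⁺} (L(‖v‖ − t) − c)/t² = −d₁‖v‖²/((σ²+d₁) vᵀA₀v) < 0, while
L(γ) = c for γ ≥ ‖v‖, so the second derivative of L is discontinuous at γ = ‖v‖:
a second-order phase transition at γ = ‖v‖. -/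
theorem depth_one_second_order_transition {n : ℕ} (hn : 1 ≤ n)
    (A₀ : Matrix (Fin n) (Fin n) ℝ) (hA : A₀.PosSemidef)
    (v : Fin n → ℝ) (hv : v ≠ 0) (hvA : 0 < v ⬝ᵥ A₀.mulVec v)
    (c : ℝ) (d₁ : ℕ) (hd₁ : 0 < d₁) (σ : ℝ) (hσ : 0 ≤ σ) :
    Filter.Tendsto
      (fun t : ℝ =>
        ((⨅ b : ℝ, effLoss1 A₀ v c d₁ σ b (Real.sqrt (v ⬝ᵥ v) - t)) - c) / t ^ 2)
      (nhdsWithin 0 (Set.Ioi 0))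
      (nhds (-((d₁ : ℝ) * (v ⬝ᵥ v) / ((σ ^ 2 + (d₁ : ℝ)) * (v ⬝ᵥ A₀.mulVec v))))) ∧
    -((d₁ : ℝ) * (v ⬝ᵥ v) / ((σ ^ 2 + (d₁ : ℝ)) * (v ⬝ᵥ A₀.mulVec v))) < 0 ∧
    ∀ γ : ℝ, Real.sqrt (v ⬝ᵥ v) ≤ γ → (⨅ b : ℝ, effLoss1 A₀ v c d₁ σ b γ) = c :=
  depth_one_second_order_transition_general A₀ hA v hvA c d₁ hd₁ σ
end

section
/- Let D ≥ 2, suppose v ≠ 0 and a_i > 0 for every i, and let γ* ∈ (0, ∞) be the critical value such that L_D(γ) < c for 0 < γ < γ* and L_D(γ) = c for γ ≥ γ*. Then L_D is concave on (0, ∞), its one-sided derivatives at γ* exist, the right derivative at γ* equals 0, and the left derivative at γ* is at least D (γ*/‖v‖)^{2/(D−1)} > 0. Hence L_D is not differentiable at γ*: a network with D ≥ 2 hidden layers has a first-order phase transition at γ = γ*. -/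
/-!
For fixed `b`, `γ ↦ ℓ̄_D(b, γ)` is concave on `(0, ∞)` (a linear term minus a sum of
`A / (K + γ)` with `A, K ≥ 0`), so `L_D` is concave as a pointwise infimum and has one-sided
derivatives; the right one at `γ*` is `0` because `L_D ≡ c` on `[γ*, ∞)`.
If `ℓ̄_D(b, γ') < c` then, with `X = (d₀ b)²`, bounding every denominator below by `γ'` gives
`γ'² < X^(D-1) ‖v‖²`, i.e. `X > (γ'/‖v‖)^(2/(D-1))`. Since `ℓ̄_D(b, γ) - γ D X` is nondecreasing
in `γ`, this yields `L_D(γ) ≤ c - (γ' - γ) D (γ'/‖v‖)^(2/(D-1))` for `γ < γ' < γ*`, and letting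
`γ' → γ*` bounds all left difference quotients of `L_D` at `γ*` from below.
-/

/-- The depth-`D` effective loss
ℓ̄_D(b, γ) = −Σᵢ d₀^{2D} b^{2D} vᵢ² / (d₀^D (σ²+d₀)^D aᵢ b^{2D} + γ) + c + γ D d₀² b². -/
noncomputable def effLoss {n : ℕ} (d₀ : ℕ) (σ : ℝ) (v a : Fin n → ℝ) (c : ℝ)
    (D : ℕ) (b γ : ℝ) : ℝ :=
  -∑ i, (d₀ : ℝ) ^ (2 * D) * b ^ (2 * D) * (v i) ^ 2 /
      ((d₀ : ℝ) ^ D * (σ ^ 2 + (d₀ : ℝ)) ^ D * a i * b ^ (2 * D) + γ)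
    + c + γ * (D : ℝ) * (d₀ : ℝ) ^ 2 * b ^ 2

open Set Filter Topology

lemma ConvexOn.fun_sum {𝕜 E β ι : Type*} [Semiring 𝕜] [PartialOrder 𝕜] [AddCommMonoid E]
    [AddCommMonoid β] [PartialOrder β] [IsOrderedAddMonoid β] [SMul 𝕜 E] [Module 𝕜 β]
    {s : Set E} (hs : Convex 𝕜 s) (t : Finset ι) {f : ι → E → β}
    (hf : ∀ i ∈ t, ConvexOn 𝕜 s (f i)) :
    ConvexOn 𝕜 s fun x => ∑ i ∈ t, f i x := by
  rw [← Finset.sum_fn]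
  exact Finset.sum_induction f (ConvexOn 𝕜 s) (fun _ _ => ConvexOn.add) (convexOn_const 0 hs) hf

lemma concaveOn_ciInf {ι E : Type*} [Nonempty ι] [AddCommMonoid E] [Module ℝ E] {s : Set E}
    {f : ι → E → ℝ} (hf : ∀ i, ConcaveOn ℝ s (f i))
    (hbdd : ∀ x ∈ s, BddBelow (range fun i => f i x)) :
    ConcaveOn ℝ s fun x => ⨅ i, f i x := by
  refine ⟨(hf (Classical.arbitrary ι)).1, fun x hx y hy p q hp hq hpq => le_ciInf fun i => ?_⟩
  calc p • (⨅ i, f i x) + q • ⨅ i, f i y ≤ p • f i x + q • f i y := by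
        gcongr
        · exact ciInf_le (hbdd x hx) i
        · exact ciInf_le (hbdd y hy) i
    _ ≤ f i (p • x + q • y) := (hf i).2 hx hy hp hq hpq

lemma convexOn_const_div_add {A K : ℝ} (hA : 0 ≤ A) (hK : 0 ≤ K) :
    ConvexOn ℝ (Ioi 0) fun γ => A / (K + γ) := by
  have h := ((convexOn_zpow (-1)).translate_right K).subset
    (fun γ (hγ : 0 < γ) => show 0 < K + γ by linarith) (convex_Ioi 0)
  refine (h.smul hA).congr fun γ _ => ?_
  simp [div_eq_mul_inv]

lemma rpow_two_div_lt_of_sq_lt_pow_mul {γ X V : ℝ} {m : ℕ} (hγ : 0 ≤ γ) (hX : 0 ≤ X)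
    (hm : m ≠ 0) (h : γ ^ 2 < X ^ m * V) : (γ / √V) ^ ((2 : ℝ) / m) < X := by
  have hV : 0 < V := pos_of_mul_pos_right ((sq_nonneg γ).trans_lt h) (by positivity)
  calc (γ / √V) ^ ((2 : ℝ) / m) = (γ ^ 2 / V) ^ (m⁻¹ : ℝ) := by
        rw [div_eq_mul_inv (2 : ℝ), Real.rpow_mul (by positivity), Real.rpow_two, div_pow,
          Real.sq_sqrt hV.le]
    _ < (X ^ m) ^ (m⁻¹ : ℝ) := by
        gcongr
        exact (div_lt_iff₀ hV).2 h
    _ = X := Real.pow_rpow_inv_natCast hX hm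

lemma le_of_hasDerivWithinAt_Iic_of_le_slope {f : ℝ → ℝ} {f' x a β : ℝ}
    (hf : HasDerivWithinAt f f' (Iic x) x) (hax : a < x)
    (hslope : ∀ y ∈ Ioo a x, β ≤ slope f x y) : β ≤ f' := by
  have h := hasDerivWithinAt_iff_tendsto_slope.mp hf.Iio_of_Iic
  rw [sdiff_singleton_eq_self (self_notMem_Iio (a := x))] at h
  exact ge_of_tendsto h (eventually_of_mem (Ioo_mem_nhdsLT hax) hslope)

lemma not_differentiableAt_of_hasDerivWithinAt_Iic_Ici {f : ℝ → ℝ} {x f₁ f₂ : ℝ}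
    (h₁ : HasDerivWithinAt f f₁ (Iic x) x) (h₂ : HasDerivWithinAt f f₂ (Ici x) x)
    (hne : f₁ ≠ f₂) : ¬ DifferentiableAt ℝ f x := fun hf =>
  hne <| ((uniqueDiffWithinAt_Iic x).eq_deriv _ h₁ hf.hasDerivAt.hasDerivWithinAt).trans
    ((uniqueDiffWithinAt_Ici x).eq_deriv _ hf.hasDerivAt.hasDerivWithinAt h₂)

noncomputable def optLoss {n : ℕ} (d₀ : ℕ) (σ : ℝ) (v a : Fin n → ℝ) (c : ℝ) (D : ℕ) (γ : ℝ) :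
    ℝ :=
  ⨅ b : ℝ, effLoss d₀ σ v a c D b γ

section EffLoss

variable {n : ℕ} {d₀ : ℕ} {σ : ℝ} {v a : Fin n → ℝ} {c : ℝ} {D : ℕ}

lemma concaveOn_effLoss (ha : ∀ i, 0 ≤ a i) (b : ℝ) :
    ConcaveOn ℝ (Ioi 0) (effLoss d₀ σ v a c D b) := by
  have hb := (even_two_mul D).pow_nonneg b
  have hsum := ConvexOn.fun_sum (convex_Ioi 0) Finset.univ fun i _ =>
    convexOn_const_div_add (A := (d₀ : ℝ) ^ (2 * D) * b ^ (2 * D) * v i ^ 2)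
      (K := (d₀ : ℝ) ^ D * (σ ^ 2 + d₀) ^ D * a i * b ^ (2 * D))
      (by positivity) (mul_nonneg (mul_nonneg (by positivity) (ha i)) hb)
  have hlin : ConcaveOn ℝ (Ioi 0) fun γ : ℝ => γ * D * d₀ ^ 2 * b ^ 2 :=
    (LinearMap.mulRight ℝ ((D : ℝ) * d₀ ^ 2 * b ^ 2)).concaveOn (convex_Ioi 0) |>.congr
      fun γ _ => by simp [mul_assoc]
  exact (hsum.neg.add_const c).add hlin

lemma effLoss_ge (hd₀ : 0 < d₀) (ha : ∀ i, 0 < a i) (b : ℝ) {γ : ℝ} (hγ : 0 < γ) :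
    c - ∑ i, (d₀ : ℝ) ^ (2 * D) * v i ^ 2 / ((d₀ : ℝ) ^ D * (σ ^ 2 + d₀) ^ D * a i)
      ≤ effLoss d₀ σ v a c D b γ := by
  have hb := (even_two_mul D).pow_nonneg b
  have hterm : ∀ i, (d₀ : ℝ) ^ (2 * D) * b ^ (2 * D) * v i ^ 2 /
        ((d₀ : ℝ) ^ D * (σ ^ 2 + d₀) ^ D * a i * b ^ (2 * D) + γ)
      ≤ (d₀ : ℝ) ^ (2 * D) * v i ^ 2 / ((d₀ : ℝ) ^ D * (σ ^ 2 + d₀) ^ D * a i) := by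
    intro i
    have hk : 0 < (d₀ : ℝ) ^ D * (σ ^ 2 + d₀) ^ D * a i := by
      have := ha i
      positivity
    rw [div_le_div_iff₀ (by positivity) hk]
    nlinarith [mul_nonneg (by positivity : 0 ≤ (d₀ : ℝ) ^ (2 * D) * v i ^ 2) hγ.le]
  have := Finset.sum_le_sum fun i (_ : i ∈ Finset.univ) => hterm i
  have : 0 ≤ γ * D * (d₀ : ℝ) ^ 2 * b ^ 2 := by positivity
  unfold effLoss
  linarith

lemma effLoss_le_sub_of_le (ha : ∀ i, 0 ≤ a i) (b : ℝ) {γ γ' : ℝ} (hγ : 0 < γ) (hγγ' : γ ≤ γ') :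
    effLoss d₀ σ v a c D b γ ≤ effLoss d₀ σ v a c D b γ' - (γ' - γ) * (D * (d₀ * b) ^ 2) := by
  have hb := (even_two_mul D).pow_nonneg b
  have hterm : ∀ i, (d₀ : ℝ) ^ (2 * D) * b ^ (2 * D) * v i ^ 2 /
        ((d₀ : ℝ) ^ D * (σ ^ 2 + d₀) ^ D * a i * b ^ (2 * D) + γ')
      ≤ (d₀ : ℝ) ^ (2 * D) * b ^ (2 * D) * v i ^ 2 /
        ((d₀ : ℝ) ^ D * (σ ^ 2 + d₀) ^ D * a i * b ^ (2 * D) + γ) := by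
    intro i
    have hk : 0 ≤ (d₀ : ℝ) ^ D * (σ ^ 2 + d₀) ^ D * a i * b ^ (2 * D) :=
      mul_nonneg (mul_nonneg (by positivity) (ha i)) hb
    gcongr
  have := Finset.sum_le_sum fun i (_ : i ∈ Finset.univ) => hterm i
  unfold effLoss
  linarith

lemma bddBelow_range_effLoss (hd₀ : 0 < d₀) (ha : ∀ i, 0 < a i) {γ : ℝ} (hγ : 0 < γ) :
    BddBelow (range fun b => effLoss d₀ σ v a c D b γ) :=
  ⟨_, forall_mem_range.2 fun b => effLoss_ge hd₀ ha b hγ⟩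

lemma sq_lt_pow_mul_of_effLoss_lt (ha : ∀ i, 0 ≤ a i) (hD : 1 ≤ D) {b γ : ℝ} (hγ : 0 < γ)
    (h : effLoss d₀ σ v a c D b γ < c) :
    γ ^ 2 < (((d₀ : ℝ) * b) ^ 2) ^ (D - 1) * ∑ i, v i ^ 2 := by
  set X := ((d₀ : ℝ) * b) ^ 2
  set V := ∑ i, v i ^ 2
  have hb := (even_two_mul D).pow_nonneg b
  have hXD : (d₀ : ℝ) ^ (2 * D) * b ^ (2 * D) = X ^ (D - 1) * X := by
    rw [← pow_succ, Nat.sub_add_cancel hD, ← pow_mul, mul_pow]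
  have hsum : ∑ i, (d₀ : ℝ) ^ (2 * D) * b ^ (2 * D) * v i ^ 2 /
        ((d₀ : ℝ) ^ D * (σ ^ 2 + d₀) ^ D * a i * b ^ (2 * D) + γ)
      ≤ X ^ (D - 1) * X * V / γ := by
    rw [← hXD, Finset.mul_sum, Finset.sum_div]
    refine Finset.sum_le_sum fun i _ => div_le_div_of_nonneg_left (by positivity) hγ ?_
    have : 0 ≤ (d₀ : ℝ) ^ D * (σ ^ 2 + d₀) ^ D * a i * b ^ (2 * D) :=
      mul_nonneg (mul_nonneg (by positivity) (ha i)) hb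
    linarith
  have hDX : γ * D * X < X ^ (D - 1) * X * V / γ := by
    have : γ * D * X = γ * D * (d₀ : ℝ) ^ 2 * b ^ 2 := by ring
    unfold effLoss at h
    linarith
  rw [lt_div_iff₀ hγ] at hDX
  have hX0 : 0 ≤ X := sq_nonneg _
  clear_value X
  have hX : 0 < X := by
    refine hX0.lt_of_ne fun hX => ?_
    simp [← hX] at hDX
  have hD' : (1 : ℝ) ≤ D := by exact_mod_cast hD
  nlinarith [sq_nonneg γ, mul_le_mul_of_nonneg_left hD' (mul_nonneg (sq_nonneg γ) hX.le)]

lemma concaveOn_optLoss (hd₀ : 0 < d₀) (ha : ∀ i, 0 < a i) :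
    ConcaveOn ℝ (Ioi 0) (optLoss d₀ σ v a c D) :=
  concaveOn_ciInf (fun b => concaveOn_effLoss (fun i => (ha i).le) b) fun _ hγ =>
    bddBelow_range_effLoss hd₀ ha hγ

lemma optLoss_le_of_optLoss_lt (hd₀ : 0 < d₀) (ha : ∀ i, 0 < a i) (hD : 2 ≤ D) {γ γ' : ℝ}
    (hγ : 0 < γ) (hγγ' : γ ≤ γ') (h : optLoss d₀ σ v a c D γ' < c) :
    optLoss d₀ σ v a c D γ ≤
      c - (γ' - γ) * (D * (γ' / √(∑ i, v i ^ 2)) ^ ((2 : ℝ) / ((D : ℝ) - 1))) := by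
  obtain ⟨b, hb⟩ := exists_lt_of_ciInf_lt h
  have hγ' : 0 < γ' := hγ.trans_le hγγ'
  have hX := rpow_two_div_lt_of_sq_lt_pow_mul hγ'.le (sq_nonneg _) (by omega : D - 1 ≠ 0)
    (sq_lt_pow_mul_of_effLoss_lt (fun i => (ha i).le) (by omega) hγ' hb)
  rw [Nat.cast_sub (by omega : 1 ≤ D), Nat.cast_one] at hX
  calc optLoss d₀ σ v a c D γ ≤ effLoss d₀ σ v a c D b γ :=
        ciInf_le (bddBelow_range_effLoss hd₀ ha hγ) b
    _ ≤ effLoss d₀ σ v a c D b γ' - (γ' - γ) * (D * (d₀ * b) ^ 2) :=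
        effLoss_le_sub_of_le (fun i => (ha i).le) b hγ hγγ'
    _ ≤ _ := by gcongr

lemma le_slope_optLoss (hd₀ : 0 < d₀) (ha : ∀ i, 0 < a i) (hD : 2 ≤ D) {γstar : ℝ}
    (hfeat : ∀ γ, 0 < γ → γ < γstar → optLoss d₀ σ v a c D γ < c)
    (hcrit : optLoss d₀ σ v a c D γstar = c) {γ : ℝ} (hγ : γ ∈ Ioo 0 γstar) :
    D * (γstar / √(∑ i, v i ^ 2)) ^ ((2 : ℝ) / ((D : ℝ) - 1))
      ≤ slope (optLoss d₀ σ v a c D) γstar γ := by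
  have he : (0 : ℝ) ≤ 2 / ((D : ℝ) - 1) :=
    div_nonneg zero_le_two (by linarith [(Nat.ofNat_le_cast.2 hD : (2 : ℝ) ≤ D)])
  have hcont : ContinuousAt (fun γ' => c - (γ' - γ) *
      (D * (γ' / √(∑ i, v i ^ 2)) ^ ((2 : ℝ) / ((D : ℝ) - 1)))) γstar :=
    continuousAt_const.sub ((continuousAt_id.sub continuousAt_const).mul
      (continuousAt_const.mul ((continuousAt_id.div_const _).rpow_const (Or.inr he))))
  have hlim : optLoss d₀ σ v a c D γ ≤
      c - (γstar - γ) * (D * (γstar / √(∑ i, v i ^ 2)) ^ ((2 : ℝ) / ((D : ℝ) - 1))) :=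
    ge_of_tendsto (hcont.tendsto.mono_left nhdsWithin_le_nhds)
      (eventually_of_mem (Ioo_mem_nhdsLT hγ.2) fun γ' hγ' =>
        optLoss_le_of_optLoss_lt hd₀ ha hD hγ.1 hγ'.1.le (hfeat γ' (hγ.1.trans hγ'.1) hγ'.2))
  rw [slope_def_field, hcrit, le_div_iff_of_neg (sub_neg.2 hγ.2)]
  linarith

end EffLoss

theorem deep_first_order_transition_general {n : ℕ} (d₀ : ℕ) (hd₀ : 0 < d₀) (σ : ℝ)
    (v a : Fin n → ℝ) (hv : v ≠ 0) (ha : ∀ i, 0 < a i) (c : ℝ)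
    (D : ℕ) (hD : 2 ≤ D) (γstar : ℝ) (hγstar : 0 < γstar)
    (hfeat : ∀ γ : ℝ, 0 < γ → γ < γstar → (⨅ b : ℝ, effLoss d₀ σ v a c D b γ) < c)
    (htriv : ∀ γ : ℝ, γstar ≤ γ → (⨅ b : ℝ, effLoss d₀ σ v a c D b γ) = c) :
    ConcaveOn ℝ (Set.Ioi 0) (fun γ : ℝ => ⨅ b : ℝ, effLoss d₀ σ v a c D b γ) ∧
    HasDerivWithinAt (fun γ : ℝ => ⨅ b : ℝ, effLoss d₀ σ v a c D b γ) 0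
      (Set.Ici γstar) γstar ∧
    (∃ dL : ℝ,
      HasDerivWithinAt (fun γ : ℝ => ⨅ b : ℝ, effLoss d₀ σ v a c D b γ) dL
        (Set.Iic γstar) γstar ∧
      (D : ℝ) * (γstar / Real.sqrt (∑ i, (v i) ^ 2)) ^ ((2 : ℝ) / ((D : ℝ) - 1)) ≤ dL) ∧
    0 < (D : ℝ) * (γstar / Real.sqrt (∑ i, (v i) ^ 2)) ^ ((2 : ℝ) / ((D : ℝ) - 1)) ∧
    ¬ DifferentiableAt ℝ (fun γ : ℝ => ⨅ b : ℝ, effLoss d₀ σ v a c D b γ) γstar := by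
  have hconc : ConcaveOn ℝ (Ioi 0) (optLoss d₀ σ v a c D) := concaveOn_optLoss hd₀ ha
  have hright : HasDerivWithinAt (optLoss d₀ σ v a c D) 0 (Ici γstar) γstar :=
    (hasDerivWithinAt_const γstar _ c).congr htriv (htriv γstar le_rfl)
  obtain ⟨dL, hleft⟩ : ∃ dL, HasDerivWithinAt (optLoss d₀ σ v a c D) dL (Iic γstar) γstar :=
    ⟨_, (differentiableWithinAt_neg_iff.mp (hconc.neg.differentiableWithinAt_Iio_of_mem_interior
      (by rwa [interior_Ioi]))).hasDerivWithinAt.Iic_of_Iio⟩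
  have hdL := le_of_hasDerivWithinAt_Iic_of_le_slope hleft hγstar fun γ hγ =>
    le_slope_optLoss hd₀ ha hD hfeat (htriv γstar le_rfl) hγ
  have hV : 0 < ∑ i, v i ^ 2 := by
    obtain ⟨i, hi⟩ := Function.ne_iff.mp hv
    exact Finset.sum_pos' (fun i _ => sq_nonneg _) ⟨i, Finset.mem_univ i, pow_two_pos_of_ne_zero hi⟩
  have hβ : 0 < (D : ℝ) * (γstar / √(∑ i, v i ^ 2)) ^ ((2 : ℝ) / ((D : ℝ) - 1)) :=
    mul_pos (Nat.cast_pos.2 (by omega)) (by positivity)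
  exact ⟨hconc, hright, ⟨dL, hleft, hdL⟩, hβ,
    not_differentiableAt_of_hasDerivWithinAt_Iic_Ici hleft hright (hβ.trans_le hdL).ne'⟩

/-- for D ≥ 2, at the critical γ* the optimal loss L_D is concave on
(0, ∞), has one-sided derivatives at γ*, with right derivative 0 and left derivative at
least D (γ*/‖v‖)^{2/(D−1)} > 0; hence L_D is not differentiable at γ*: a first-order
phase transition. -/
theorem deep_first_order_transition {n : ℕ} (d₀ : ℕ) (hd₀ : 0 < d₀) (σ : ℝ) (hσ : 0 ≤ σ)
    (v a : Fin n → ℝ) (hv : v ≠ 0) (ha : ∀ i, 0 < a i) (c : ℝ)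
    (D : ℕ) (hD : 2 ≤ D) (γstar : ℝ) (hγstar : 0 < γstar)
    (hfeat : ∀ γ : ℝ, 0 < γ → γ < γstar → (⨅ b : ℝ, effLoss d₀ σ v a c D b γ) < c)
    (htriv : ∀ γ : ℝ, γstar ≤ γ → (⨅ b : ℝ, effLoss d₀ σ v a c D b γ) = c) :
    ConcaveOn ℝ (Set.Ioi 0) (fun γ : ℝ => ⨅ b : ℝ, effLoss d₀ σ v a c D b γ) ∧
    HasDerivWithinAt (fun γ : ℝ => ⨅ b : ℝ, effLoss d₀ σ v a c D b γ) 0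
      (Set.Ici γstar) γstar ∧
    (∃ dL : ℝ,
      HasDerivWithinAt (fun γ : ℝ => ⨅ b : ℝ, effLoss d₀ σ v a c D b γ) dL
        (Set.Iic γstar) γstar ∧
      (D : ℝ) * (γstar / Real.sqrt (∑ i, (v i) ^ 2)) ^ ((2 : ℝ) / ((D : ℝ) - 1)) ≤ dL) ∧
    0 < (D : ℝ) * (γstar / Real.sqrt (∑ i, (v i) ^ 2)) ^ ((2 : ℝ) / ((D : ℝ) - 1)) ∧
    ¬ DifferentiableAt ℝ (fun γ : ℝ => ⨅ b : ℝ, effLoss d₀ σ v a c D b γ) γstar :=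
  deep_first_order_transition_general d₀ hd₀ σ v a hv ha c D hD γstar hγstar hfeat htriv
end

section
/- Fix γ > 0, σ > 0, and suppose a_i > 0 for every i. Then there exists D₀ such that for every integer D ≥ D₀ and every b ≠ 0, one has ℓ̄_D(b, γ) > c; consequently L_D(γ) = c for all D ≥ D₀, and lim_{D→∞} L_D(γ) = c. In the deep linear network interpretation c = E[y²], so in the infinite-depth limit the optimal loss at any positive regularization strength equals the trivial value E[y²]. -/
open Filter Topology

section SaturatingSums

variable {ι : Type*} [Fintype ι] {w A : ι → ℝ} {x γ : ℝ}

theorem sum_mul_div_add_le_mul_sum_div (hw : ∀ i, 0 ≤ w i) (hA : ∀ i, 0 ≤ A i) (hx : 0 ≤ x)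
    (hγ : 0 < γ) : ∑ i, x * w i / (A i * x + γ) ≤ x * (∑ i, w i) / γ := by
  rw [Finset.mul_sum, Finset.sum_div]
  gcongr with i
  · exact mul_nonneg hx (hw i)
  · exact le_add_of_nonneg_left (mul_nonneg (hA i) hx)

theorem sum_mul_div_add_le_sum_div (hw : ∀ i, 0 ≤ w i) (hA : ∀ i, 0 < A i) (hx : 0 ≤ x)
    (hγ : 0 < γ) : ∑ i, x * w i / (A i * x + γ) ≤ ∑ i, w i / A i := by
  refine Finset.sum_le_sum fun i _ => ?_
  have hAi := hA i
  rw [div_le_div_iff₀ (by positivity) hAi]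
  nlinarith [hw i]

end SaturatingSums

theorem eventually_sum_lt_mul {n : ℕ} {v a : Fin n → ℝ} {q γ : ℝ} (hq : 1 < q)
    (ha : ∀ i, 0 < a i) (hγ : 0 < γ) :
    ∀ᶠ D : ℕ in atTop, ∀ t : ℝ, 0 < t →
      ∑ i, t ^ D * v i ^ 2 / (q ^ D * a i * t ^ D + γ) < γ * D * t := by
  have hq₀ : 0 < q := zero_lt_one.trans hq
  have hsmall : ∀ᶠ D : ℕ in atTop, ∑ i, v i ^ 2 < D * γ ^ 2 :=
    ((tendsto_natCast_atTop_atTop (R := ℝ)).eventually_gt_atTop ((∑ i, v i ^ 2) / γ ^ 2)).mono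
      fun D hD => (div_lt_iff₀ (by positivity)).1 hD
  have hlarge : ∀ᶠ D : ℕ in atTop, (∑ i, v i ^ 2 / a i) / q ^ D < γ :=
    (tendsto_const_nhds.div_atTop (tendsto_pow_atTop_atTop_of_one_lt hq)).eventually
      (eventually_lt_nhds hγ)
  filter_upwards [eventually_ne_atTop 0, hsmall, hlarge] with D hD hsmall hlarge t ht
  have hD₁ : (1 : ℝ) ≤ D := Nat.one_le_cast.2 (Nat.pos_of_ne_zero hD)
  rcases le_or_gt t 1 with ht₁ | ht₁
  · calc ∑ i, t ^ D * v i ^ 2 / (q ^ D * a i * t ^ D + γ)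
          ≤ t ^ D * (∑ i, v i ^ 2) / γ :=
            sum_mul_div_add_le_mul_sum_div (fun i => sq_nonneg _)
              (fun i => (mul_pos (pow_pos hq₀ D) (ha i)).le) (by positivity) hγ
      _ ≤ t * (∑ i, v i ^ 2) / γ := by
            gcongr
            exact pow_le_of_le_one ht.le ht₁ hD
      _ < γ * D * t := by
            rw [div_lt_iff₀ hγ]
            nlinarith
  · calc ∑ i, t ^ D * v i ^ 2 / (q ^ D * a i * t ^ D + γ)
          ≤ ∑ i, v i ^ 2 / (q ^ D * a i) :=
            sum_mul_div_add_le_sum_div (fun i => sq_nonneg _)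
              (fun i => mul_pos (pow_pos hq₀ D) (ha i)) (by positivity) hγ
      _ = (∑ i, v i ^ 2 / a i) / q ^ D := by
            rw [Finset.sum_div]
            exact Finset.sum_congr rfl fun i _ => by rw [div_div, mul_comm]
      _ < γ := hlarge
      _ ≤ γ * D * t := by
            rw [mul_assoc]
            exact le_mul_of_one_le_right hγ.le (by nlinarith)

section EffLoss

variable {n : ℕ} {d₀ : ℕ} {σ : ℝ} {v a : Fin n → ℝ} {c : ℝ} {D : ℕ} {b γ : ℝ}

theorem effLoss_eq (hd₀ : 0 < d₀) :
    effLoss d₀ σ v a c D b γ = c + γ * D * (d₀ ^ 2 * b ^ 2) -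
      ∑ i, (d₀ ^ 2 * b ^ 2) ^ D * v i ^ 2 /
        ((1 + σ ^ 2 / d₀) ^ D * a i * (d₀ ^ 2 * b ^ 2) ^ D + γ) := by
  have hbase : (1 + σ ^ 2 / d₀) * (d₀ ^ 2 * b ^ 2) = d₀ * (σ ^ 2 + d₀) * b ^ 2 := by
    field_simp
    ring
  have hden : ∀ i, (1 + σ ^ 2 / d₀) ^ D * a i * (d₀ ^ 2 * b ^ 2) ^ D =
      (d₀ : ℝ) ^ D * (σ ^ 2 + d₀) ^ D * a i * b ^ (2 * D) := fun i => by
    rw [mul_right_comm, ← mul_pow, hbase, mul_pow, mul_pow, pow_mul]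
    ring
  have hnum : ∀ i, ((d₀ : ℝ) ^ 2 * b ^ 2) ^ D * v i ^ 2 =
      (d₀ : ℝ) ^ (2 * D) * b ^ (2 * D) * v i ^ 2 := fun i => by
    rw [mul_pow, pow_mul, pow_mul]
  simp only [effLoss, hden, hnum]
  ring

theorem effLoss_zero (hD : D ≠ 0) : effLoss d₀ σ v a c D 0 γ = c := by
  simp [effLoss, zero_pow (mul_ne_zero two_ne_zero hD)]

theorem eventually_lt_effLoss (hd₀ : 0 < d₀) (hσ : 0 < σ) (ha : ∀ i, 0 < a i) (hγ : 0 < γ) :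
    ∀ᶠ D : ℕ in atTop, ∀ b : ℝ, b ≠ 0 → c < effLoss d₀ σ v a c D b γ := by
  have hq : 1 < 1 + σ ^ 2 / d₀ := lt_add_of_pos_right 1 (by positivity)
  filter_upwards [eventually_sum_lt_mul (v := v) hq ha hγ] with D hD b hb
  rw [effLoss_eq hd₀]
  have hd₀' : (0 : ℝ) < d₀ := Nat.cast_pos.2 hd₀
  linarith [hD (d₀ ^ 2 * b ^ 2) (by positivity)]

theorem iInf_effLoss_eq (hD : D ≠ 0) (hlt : ∀ b : ℝ, b ≠ 0 → c < effLoss d₀ σ v a c D b γ) :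
    ⨅ b : ℝ, effLoss d₀ σ v a c D b γ = c := by
  refine IsLeast.csInf_eq ⟨⟨0, effLoss_zero hD⟩, Set.forall_mem_range.2 fun b => ?_⟩
  rcases eq_or_ne b 0 with rfl | hb
  · exact (effLoss_zero hD).ge
  · exact (hlt b hb).le

end EffLoss

/-- for fixed γ > 0 and σ > 0, there is a depth D₀ beyond which every
b ≠ 0 has ℓ̄_D(b, γ) > c, hence L_D(γ) = c for all D ≥ D₀ and L_D(γ) → c as D → ∞:
the infinite-depth optimal loss at positive regularization is the trivial value E[y²]. -/
theorem infinite_depth_trivial {n : ℕ} (d₀ : ℕ) (hd₀ : 0 < d₀) (σ : ℝ) (hσ : 0 < σ)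
    (v a : Fin n → ℝ) (ha : ∀ i, 0 < a i) (c : ℝ) (γ : ℝ) (hγ : 0 < γ) :
    ∃ D₀ : ℕ,
      (∀ D : ℕ, D₀ ≤ D → ∀ b : ℝ, b ≠ 0 → c < effLoss d₀ σ v a c D b γ) ∧
      (∀ D : ℕ, D₀ ≤ D → (⨅ b : ℝ, effLoss d₀ σ v a c D b γ) = c) ∧
      Filter.Tendsto (fun D : ℕ => ⨅ b : ℝ, effLoss d₀ σ v a c D b γ)
        Filter.atTop (nhds c) := by
  have hlt := eventually_lt_effLoss (v := v) (c := c) hd₀ hσ ha hγ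
  have hinf : ∀ᶠ D : ℕ in atTop, ⨅ b : ℝ, effLoss d₀ σ v a c D b γ = c :=
    (hlt.and (eventually_ne_atTop 0)).mono fun D h => iInf_effLoss_eq h.2 h.1
  obtain ⟨D₀, hD₀⟩ := eventually_atTop.1 (hlt.and hinf)
  exact ⟨D₀, fun D hD => (hD₀ D hD).1, fun D hD => (hD₀ D hD).2,
    tendsto_const_nhds.congr' (hinf.mono fun _ h => h.symm)⟩
end
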